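/- arXiv:2103.05836 — 3 statements merged into one kernel-verified Lean document; each statement's English description precedes it below -/
import Mathlib

section
/- p-th power rule: let F be a commutative ring of prime characteristic p. For f ∈ F[θ], n ≥ 0, and j ≥ 1: if j = k·p^n for some integer k then ∂_θ^j(f^{p^n}) = (∂_θ^k(f))^{p^n}, and if p^n does not divide j then ∂_θ^j(f^{p^n}) = 0. -/
/-!
Writing `q = p ^ n`, in characteristic `p` we have `f ^ q = φ (f(θ ^ q))` with `φ` the `n`-fold
Frobenius on coefficients, and `φ` commutes with `∂^j`. The coefficients of `∂^j (g(θ ^ q))` are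
binomial coefficients `binom(q a, j)`, which reduce to `binom(a, j / q)` or to `0` according as
`q ∣ j` or not: compare the coefficients of `(θ + 1) ^ (q a) = (θ ^ q + 1) ^ a`.
-/

open Polynomial

theorem Nat.cast_choose_expChar_pow_mul (R : Type*) [CommSemiring R] (p : ℕ) [ExpChar R p]
    (n a j : ℕ) :
    (((p ^ n * a).choose j : ℕ) : R) = if p ^ n ∣ j then ((a.choose (j / p ^ n) : ℕ) : R) else 0 := by
  have h : (X + 1 : R[X]) ^ (p ^ n * a) = expand R (p ^ n) ((X + 1) ^ a) := by
    rw [pow_mul, add_pow_expChar_pow, one_pow, map_pow, map_add, expand_X, map_one]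
  simpa only [coeff_X_add_one_pow, coeff_expand (expChar_pow_pos R p n), apply_ite] using
    congrArg (coeff · j) h

namespace Polynomial

theorem hasseDeriv_map {R S : Type*} [Semiring R] [Semiring S] (φ : R →+* S) (k : ℕ)
    (f : R[X]) : hasseDeriv k (f.map φ) = (hasseDeriv k f).map φ := by
  ext m
  simp only [hasseDeriv_coeff, coeff_map, map_mul, map_natCast]

section ExpChar

variable {R : Type*} [CommSemiring R] (p : ℕ) [ExpChar R p]

theorem hasseDeriv_mul_expand_expChar_pow (n k : ℕ) (f : R[X]) :
    hasseDeriv (k * p ^ n) (expand R (p ^ n) f) = expand R (p ^ n) (hasseDeriv k f) := by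
  have hq := expChar_pow_pos R p n
  ext m
  rw [hasseDeriv_coeff, coeff_expand hq, coeff_expand hq]
  by_cases hm : p ^ n ∣ m
  · obtain ⟨a, rfl⟩ := hm
    have hsum : p ^ n * a + k * p ^ n = p ^ n * (a + k) := by ring
    rw [hsum, if_pos (dvd_mul_right _ _), if_pos (dvd_mul_right _ _),
      Nat.cast_choose_expChar_pow_mul, if_pos (dvd_mul_left _ _), hasseDeriv_coeff,
      Nat.mul_div_cancel_left _ hq, Nat.mul_div_cancel_left _ hq, Nat.mul_div_cancel _ hq]
  · have hsum : ¬ p ^ n ∣ m + k * p ^ n := by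
      rwa [Nat.dvd_add_left (dvd_mul_left _ _)]
    rw [if_neg hm, if_neg hsum, mul_zero]

theorem hasseDeriv_expand_expChar_pow_of_not_dvd {n j : ℕ} (hj : ¬ p ^ n ∣ j) (f : R[X]) :
    hasseDeriv j (expand R (p ^ n) f) = 0 := by
  ext m
  rw [hasseDeriv_coeff, coeff_expand (expChar_pow_pos R p n), coeff_zero]
  split_ifs with h
  · obtain ⟨a, ha⟩ := h
    rw [ha, Nat.cast_choose_expChar_pow_mul, if_neg hj, zero_mul]
  · rw [mul_zero]

end ExpChar

end Polynomial

theorem hasseDeriv_p_power_rule_general {F : Type*} [CommRing F] (p : ℕ) [Fact p.Prime] [CharP F p]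
    (f : Polynomial F) (n j : ℕ) :
    (∀ k : ℕ, j = k * p ^ n →
        Polynomial.hasseDeriv j (f ^ p ^ n) = Polynomial.hasseDeriv k f ^ p ^ n) ∧
    (¬ p ^ n ∣ j → Polynomial.hasseDeriv j (f ^ p ^ n) = 0) := by
  rw [← map_iterateFrobenius_expand p f n, hasseDeriv_map]
  refine ⟨?_, fun hj => ?_⟩
  · rintro k rfl
    rw [hasseDeriv_mul_expand_expChar_pow, map_iterateFrobenius_expand]
  · rw [hasseDeriv_expand_expChar_pow_of_not_dvd p hj, Polynomial.map_zero]

/-- The `p`-th power rule for hyperderivatives in characteristic `p`. -/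
theorem hasseDeriv_p_power_rule {F : Type*} [CommRing F] (p : ℕ) [Fact p.Prime] [CharP F p]
    (f : Polynomial F) (n j : ℕ) (hj : 1 ≤ j) :
    (∀ k : ℕ, j = k * p ^ n →
        Polynomial.hasseDeriv j (f ^ p ^ n) = Polynomial.hasseDeriv k f ^ p ^ n) ∧
    (¬ p ^ n ∣ j → Polynomial.hasseDeriv j (f ^ p ^ n) = 0) :=
  hasseDeriv_p_power_rule_general p f n j
end

section
/- Chain rule specialization (a): let F be a field and f ∈ F[θ][t] a polynomial in two variables θ, t. Then for all j ≥ 0, ∂_θ^j(f)|_{t=θ} = Σ_{i=0}^{j} (-1)^i · ∂_θ^{j-i}( ∂_t^i(f)|_{t=θ} ), where ∂_θ and ∂_t denote partial hyperderivatives with respect to θ and t, and |_{t=θ} means substituting t = θ. -/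
/-! Both sides are additive in `f`, so it suffices to take `f = r θ^c t^b`. Then every term is a
multiple of `θ^(c+b-j)`, and comparing coefficients leaves the binomial identity
`∑ᵢ (-1)^i C(b,i) C(c+b-i, j-i) = C(c,j)`: the coefficient of `x^j` in `(1+x)^c ((1+x) - x)^b`. -/

/-- The partial hyperderivative with respect to `θ` on `F[θ][t]` (with outer variable `t`
and coefficients in `F[θ]`), acting on coefficients. -/
noncomputable def thetaHasse {F : Type*} [CommRing F] (j : ℕ)
    (f : Polynomial (Polynomial F)) : Polynomial (Polynomial F) :=
  f.sum fun n a => Polynomial.C (Polynomial.hasseDeriv j a) * Polynomial.X ^ n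

open Polynomial Finset

theorem alternating_sum_choose_mul_choose_sub {R : Type*} [CommRing R] (b c j : ℕ) :
    ∑ i ∈ range (j + 1), (-1 : R) ^ i * b.choose i * (c + b - i).choose (j - i)
      = c.choose j := by
  induction b generalizing c j with
  | zero => simp [sum_range_succ']
  | succ b ih =>
    cases j with
    | zero => simp
    | succ j =>
      have hsub : ∀ i, c + (b + 1) - (i + 1) = c + b - i := fun i => by omega
      have hsub' : ∀ i, c + 1 + b - (i + 1) = c + b - i := fun i => by omega
      calc ∑ i ∈ range (j + 1 + 1),
            (-1 : R) ^ i * (b + 1).choose i * (c + (b + 1) - i).choose (j + 1 - i)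
          = ∑ i ∈ range (j + 1), (-1 : R) ^ (i + 1) * (b.choose i + b.choose (i + 1))
              * (c + b - i).choose (j - i) + (c + 1 + b).choose (j + 1) := by
            simp [sum_range_succ', hsub, Nat.choose_succ_succ', add_right_comm c 1 b,
              add_assoc c b 1]
        _ = -∑ i ∈ range (j + 1), (-1 : R) ^ i * b.choose i * (c + b - i).choose (j - i)
              + ∑ i ∈ range (j + 1 + 1),
                  (-1 : R) ^ i * b.choose i * (c + 1 + b - i).choose (j + 1 - i) := by
            rw [sum_range_succ' _ (j + 1), ← sum_neg_distrib]
            simp only [hsub', Nat.add_sub_add_right, pow_zero, Nat.choose_zero_right,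
              Nat.cast_one, Nat.sub_zero, one_mul, ← add_assoc, ← sum_add_distrib]
            congr 1
            exact sum_congr rfl fun i _ => by ring
        _ = c.choose (j + 1) := by
            rw [ih, ih, Nat.choose_succ_succ']
            push_cast
            ring

section

variable {R : Type*} [CommRing R]

theorem thetaHasse_add (j : ℕ) (p q : R[X][X]) :
    thetaHasse j (p + q) = thetaHasse j p + thetaHasse j q :=
  sum_add_index p q _ (fun _ => by simp) fun _ _ _ => by rw [map_add, map_add, add_mul]

theorem thetaHasse_monomial (j n : ℕ) (a : R[X]) :
    thetaHasse j (monomial n a) = monomial n (hasseDeriv j a) := by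
  rw [thetaHasse, sum_monomial_index _ _ (by simp), C_mul_X_pow_eq_monomial]

theorem eval_X_monomial_monomial (b c : ℕ) (r : R) :
    eval X (monomial b (monomial c r)) = monomial (c + b) r := by
  rw [eval_monomial, X_pow_eq_monomial, monomial_mul_monomial, mul_one]

theorem eval_X_thetaHasse_monomial_monomial (j b c : ℕ) (r : R) :
    eval X (thetaHasse j (monomial b (monomial c r))) = monomial (c + b - j) (c.choose j * r) := by
  rw [thetaHasse_monomial, hasseDeriv_monomial, eval_X_monomial_monomial]
  rcases le_or_gt j c with hjc | hcj
  · rw [Nat.sub_add_comm hjc]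
  · simp [Nat.choose_eq_zero_of_lt hcj]

theorem hasseDeriv_eval_X_hasseDeriv_monomial_monomial {i j : ℕ} (hij : i ≤ j) (b c : ℕ)
    (r : R) :
    hasseDeriv (j - i) (eval X (hasseDeriv i (monomial b (monomial c r))))
      = monomial (c + b - j) (b.choose i * (c + b - i).choose (j - i) * r) := by
  rw [hasseDeriv_monomial, ← C_eq_natCast, C_mul_monomial, eval_X_monomial_monomial,
    hasseDeriv_monomial]
  rcases le_or_gt i b with hib | hbi
  · have hexp : c + (b - i) = c + b - i := by omega
    rw [hexp, Nat.sub_sub, Nat.add_sub_cancel' hij, mul_left_comm, mul_assoc]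
  · simp [Nat.choose_eq_zero_of_lt hbi]

theorem eval_X_thetaHasse_monomial_monomial_eq_sum (j b c : ℕ) (r : R) :
    eval X (thetaHasse j (monomial b (monomial c r)))
      = ∑ i ∈ range (j + 1), (-1 : R[X]) ^ i
          * hasseDeriv (j - i) (eval X (hasseDeriv i (monomial b (monomial c r)))) := by
  have hterm : ∀ i ∈ range (j + 1), (-1 : R[X]) ^ i
        * hasseDeriv (j - i) (eval X (hasseDeriv i (monomial b (monomial c r))))
      = monomial (c + b - j) ((-1 : R) ^ i * b.choose i * (c + b - i).choose (j - i) * r) := by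
    intro i hi
    rw [hasseDeriv_eval_X_hasseDeriv_monomial_monomial (Nat.lt_succ_iff.mp (mem_range.mp hi)),
      show (-1 : R[X]) ^ i = C ((-1) ^ i) by simp, C_mul_monomial, mul_assoc, mul_assoc, mul_assoc]
  rw [sum_congr rfl hterm, ← map_sum, ← sum_mul, alternating_sum_choose_mul_choose_sub,
    eval_X_thetaHasse_monomial_monomial]

end

/-- Chain rule specialization (a):
`∂_θ^j(f)|_{t=θ} = Σ_{i=0}^{j} (-1)^i ∂_θ^{j-i}( ∂_t^i(f)|_{t=θ} )`. -/
theorem chain_rule_specialization_a {F : Type*} [Field F]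
    (f : Polynomial (Polynomial F)) (j : ℕ) :
    Polynomial.eval Polynomial.X (thetaHasse j f)
      = ∑ i ∈ Finset.range (j + 1),
          (-1 : Polynomial F) ^ i
            * Polynomial.hasseDeriv (j - i)
                (Polynomial.eval Polynomial.X (Polynomial.hasseDeriv i f)) := by
  induction f using Polynomial.induction_on' with
  | add p q hp hq => simp only [thetaHasse_add, eval_add, map_add, hp, hq, mul_add, sum_add_distrib]
  | monomial b a =>
    induction a using Polynomial.induction_on' with
    | add p q hp hq =>
      simp only [map_add, thetaHasse_add, eval_add, hp, hq, mul_add, sum_add_distrib]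
    | monomial c r => exact eval_X_thetaHasse_monomial_monomial_eq_sum j b c r
end

section
/- Functional equation for Anderson generating functions of a Drinfeld module: let K be the completion of an algebraic closure of F_q((1/θ)), let φ_t = θ + b_1τ + ⋯ + b_rτ^r define a Drinfeld module with exponential exp_φ : K → K satisfying exp_φ(θz) = φ_t(exp_φ(z)), and for y ∈ K let G_y = Σ_{n≥0} exp_φ(y/θ^{n+1}) t^n ∈ T (the Tate algebra of the closed unit disk). Then θ·G_y + b_1·G_y^{(1)} + ⋯ + b_r·G_y^{(r)} = t·G_y + exp_φ(y), where G^{(i)} denotes Frobenius twisting of coefficients by q^i. -/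
/-!
Coefficientwise, the functional equation `exp_φ(θz) = φ_t(exp_φ(z))` at `z = y/θ^{n+1}` says that
`φ_t` maps the `n`-th coefficient `exp_φ(y/θ^{n+1})` of `G_y` to `exp_φ(y/θ^n)`. Hence the left side
is the series `Σ_n exp_φ(y/θ^n) tⁿ`, which is `t G_y` plus its constant term `exp_φ(y)`.
-/

theorem apply_div_pow_eq_of_apply_mul_eq {K : Type*} [Field K] {θ : K} (hθ : θ ≠ 0)
    {f φ : K → K} (hf : ∀ z, f (θ * z) = φ (f z)) (y : K) (n : ℕ) :
    f (y / θ ^ n) = φ (f (y / θ ^ (n + 1))) := by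
  rw [← hf]
  congr 1
  field_simp
  ring

namespace PowerSeries

theorem mk_eq_X_mul_mk_succ_add_C {R : Type*} [Semiring R] (a : ℕ → R) :
    mk a = X * mk (fun n => a (n + 1)) + C (a 0) := by
  simpa only [coeff_mk, constantCoeff_mk] using (mk a).eq_X_mul_shift_add_const

theorem C_mul_mk_add_sum_C_mul_mk_pow {R ι : Type*} [CommSemiring R] [Fintype ι]
    (c : R) (b : ι → R) (m : ι → ℕ) (g : ℕ → R) :
    C c * mk g + ∑ i, C (b i) * mk (fun n => g n ^ m i)
      = mk fun n => c * g n + ∑ i, b i * g n ^ m i := by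
  ext n
  simp only [map_add, map_sum, coeff_C_mul, coeff_mk]

end PowerSeries

open PowerSeries in
theorem agf_functional_equation_general {K : Type*} [NormedField K] (p : ℕ) (e : ℕ)
    (θ : K) (hθ : 1 < ‖θ‖) (r : ℕ) (b : Fin r → K) (expφ : K → K)
    (hexp : ∀ z : K, expφ (θ * z)
      = θ * expφ z + ∑ i : Fin r, b i * expφ z ^ (p ^ e) ^ ((i : ℕ) + 1))
    (y : K) :
    let G : PowerSeries K := PowerSeries.mk fun n => expφ (y / θ ^ (n + 1))
    let tw : ℕ → PowerSeries K → PowerSeries K := fun i f =>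
      PowerSeries.mk fun n => PowerSeries.coeff n f ^ (p ^ e) ^ i
    PowerSeries.C θ * G + ∑ i : Fin r, PowerSeries.C (b i) * tw ((i : ℕ) + 1) G
      = PowerSeries.X * G + PowerSeries.C (expφ y) := by
  intro G tw
  have hθ0 : θ ≠ 0 := norm_pos_iff.mp (one_pos.trans hθ)
  let φt : K → K := fun x => θ * x + ∑ i : Fin r, b i * x ^ (p ^ e) ^ ((i : ℕ) + 1)
  have htw : ∀ i, tw i G = mk fun n => expφ (y / θ ^ (n + 1)) ^ (p ^ e) ^ i := fun i => by
    simp only [tw, G, coeff_mk]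
  calc C θ * G + ∑ i : Fin r, C (b i) * tw ((i : ℕ) + 1) G
      = mk fun n => φt (expφ (y / θ ^ (n + 1))) := by
        simp only [htw]
        exact C_mul_mk_add_sum_C_mul_mk_pow θ b (fun i => (p ^ e) ^ ((i : ℕ) + 1)) _
    _ = mk fun n => expφ (y / θ ^ n) :=
        congrArg mk (funext fun n => (apply_div_pow_eq_of_apply_mul_eq hθ0 hexp y n).symm)
    _ = X * G + C (expφ y) := by
        rw [mk_eq_X_mul_mk_succ_add_C, pow_zero, div_one]

/-- Functional equation for the Anderson generating function of a Drinfeld module: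
with `G_y = Σ_n exp_φ(y/θ^{n+1}) tⁿ`, one has
`θ G_y + b₁ G_y^{(1)} + ⋯ + b_r G_y^{(r)} = t G_y + exp_φ(y)`. -/
theorem agf_functional_equation {K : Type*} [NormedField K] [CompleteSpace K]
    [IsUltrametricDist K] (p : ℕ) [Fact p.Prime] [CharP K p] (e : ℕ) (he : 0 < e)
    (θ : K) (hθ : 1 < ‖θ‖) (r : ℕ) (b : Fin r → K) (expφ : K → K)
    (hexp : ∀ z : K, expφ (θ * z)
      = θ * expφ z + ∑ i : Fin r, b i * expφ z ^ (p ^ e) ^ ((i : ℕ) + 1))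
    (y : K) :
    let G : PowerSeries K := PowerSeries.mk fun n => expφ (y / θ ^ (n + 1))
    let tw : ℕ → PowerSeries K → PowerSeries K := fun i f =>
      PowerSeries.mk fun n => PowerSeries.coeff n f ^ (p ^ e) ^ i
    PowerSeries.C θ * G + ∑ i : Fin r, PowerSeries.C (b i) * tw ((i : ℕ) + 1) G
      = PowerSeries.X * G + PowerSeries.C (expφ y) :=
  agf_functional_equation_general p e θ hθ r b expφ hexp y
end
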